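/- arXiv:2208.14909 — 3 statements merged into one kernel-verified Lean document; each statement's English description precedes it below -/
import Mathlib

section
/- Fix c ≥ 0 and 0 < δ ≤ 1/2. There is a constant C(c) > 0 such that the following holds for all real T ≥ 2, all real z with 2 ≤ z < T^δ, and all complex sequences (a_n), (b_m) with |a_n| ≤ 1 and |b_m| ≤ 1 for all n, m. Define H = {k ∈ ℕ : z^{1/2} ≤ k ≤ T^δ/z^{1/2} − 1}, I_k = {n ∈ ℕ : z^{1/2} k < n ≤ z^{1/2}(k+1)} and J_k = {m ∈ ℕ : z < m ≤ T/(z^{1/2}(k+1))}. Then |∑*_{z < n ≤ T^δ} ∑*_{z < m ≤ T/n} (nm)^c a_n b_m (n/m) − ∑_{k ∈ H} ∑*_{n ∈ I_k} ∑*_{m ∈ J_k} (nm)^c a_n b_m (n/m)| ≤ C(c) · T^{1+c} / z^{1/2}, where starred sums run over odd square-free integers in the indicated ranges. -/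
open Finset
open scoped Classical

/-!
The boxes `I_k × J_k`, `k ∈ H`, are pairwise disjoint and lie inside the hyperbolic region
`z < n ≤ T^δ, z < m ≤ T/n`, so the difference of the two sums is a sum over the uncovered
lattice points, each term of which has size at most `(nm)^c ≤ T^c`. With `w = √z`, a point
`(n, m)` of the region lies in the box with `k = ⌈n/w⌉ - 1` unless `n ≤ z + w`, `n > T^δ - w`
or `n > T/m - w`. Each of these three sets has at most `(w + 1) T/z ≤ 2T/w` points: in the
first two there are `≤ w + 1` values of `n` and `≤ T/z` values of `m` for each; in the last
there are `≤ T/z` values of `m` and `≤ w + 1` values of `n` for each.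
-/

theorem card_le_of_forall_mem_Ioc {s : Finset ℕ} {A B : ℝ} (hAB : A ≤ B + 1)
    (h : ∀ n ∈ s, A < n ∧ (n : ℝ) ≤ B) : (#s : ℝ) ≤ B - A + 1 := by
  have hsub : s.map Nat.castEmbedding ⊆ Ioc ⌊A⌋ ⌊B⌋ := by
    intro k hk
    obtain ⟨n, hn, rfl⟩ := mem_map.mp hk
    obtain ⟨hA, hB⟩ := h n hn
    exact mem_Ioc.mpr
      ⟨Int.floor_lt.mpr (by exact_mod_cast hA), Int.le_floor.mpr (by exact_mod_cast hB)⟩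
  have hcard : (#s : ℤ) ≤ max (⌊B⌋ - ⌊A⌋) 0 := by
    have := card_le_card hsub
    rw [card_map, Int.card_Ioc] at this
    omega
  have hcard' : (#s : ℝ) ≤ max ((⌊B⌋ : ℝ) - ⌊A⌋) 0 := by exact_mod_cast hcard
  refine hcard'.trans (max_le ?_ (by linarith))
  linarith [Int.floor_le B, Int.lt_floor_add_one A]

theorem card_le_of_forall_mem_Ioc_fiberwise {F : Finset (ℕ × ℕ)} {A B K : ℝ} {C D : ℕ → ℝ}
    (hAB : A ≤ B + 1) (hCD : ∀ n, C n ≤ D n + 1) (hK : ∀ n, D n - C n + 1 ≤ K)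
    (hF : ∀ x ∈ F, (A < x.1 ∧ (x.1 : ℝ) ≤ B) ∧ C x.1 < x.2 ∧ (x.2 : ℝ) ≤ D x.1) :
    (#F : ℝ) ≤ (B - A + 1) * K := by
  have hfiber : ∀ n, (#{x ∈ F | x.1 = n} : ℝ) ≤ K := by
    intro n
    rw [← card_image_of_injOn (f := Prod.snd) fun x hx y hy hxy =>
      Prod.ext ((mem_filter.mp hx).2.trans (mem_filter.mp hy).2.symm) hxy]
    refine (card_le_of_forall_mem_Ioc (hCD n) fun m hm => ?_).trans (hK n)
    obtain ⟨x, hx, rfl⟩ := mem_image.mp hm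
    obtain ⟨hxF, rfl⟩ := mem_filter.mp hx
    exact (hF x hxF).2
  have hbase : (#(F.image Prod.fst) : ℝ) ≤ B - A + 1 :=
    card_le_of_forall_mem_Ioc hAB fun n hn => by
      obtain ⟨x, hx, rfl⟩ := mem_image.mp hn
      exact (hF x hx).1
  have hK0 : 0 ≤ K := by linarith [hCD 0, hK 0]
  calc (#F : ℝ) = ∑ n ∈ F.image Prod.fst, (#{x ∈ F | x.1 = n} : ℝ) := by
        exact_mod_cast card_eq_sum_card_image Prod.fst F
    _ ≤ #(F.image Prod.fst) * K := by
        simpa using sum_le_sum fun n (_ : n ∈ F.image Prod.fst) => hfiber n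
    _ ≤ (B - A + 1) * K := mul_le_mul_of_nonneg_right hbase hK0

noncomputable section

variable (p : ℕ → Prop) [DecidablePred p] (N : ℕ) (T z w X : ℝ)

def hyperbolicRegion : Finset (ℕ × ℕ) :=
  (Icc 1 N ×ˢ Icc 1 N).filter fun x =>
    (p x.1 ∧ z < x.1 ∧ (x.1 : ℝ) ≤ X) ∧ p x.2 ∧ z < x.2 ∧ (x.2 : ℝ) ≤ T / x.1

def coveringBox (k : ℕ) : Finset (ℕ × ℕ) :=
  (Icc 1 N ×ˢ Icc 1 N).filter fun x =>
    (p x.1 ∧ w * k < x.1 ∧ (x.1 : ℝ) ≤ w * (k + 1)) ∧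
      p x.2 ∧ z < x.2 ∧ (x.2 : ℝ) ≤ T / (w * (k + 1))

def coveringIndices : Finset ℕ :=
  (Icc 1 N).filter fun k => w ≤ k ∧ (k : ℝ) ≤ X / w - 1

theorem sum_hyperbolicRegion (f : ℕ → ℕ → ℂ) :
    ∑ x ∈ hyperbolicRegion p N T z X, f x.1 x.2 =
      ∑ n ∈ (Icc 1 N).filter (fun n : ℕ => p n ∧ z < n ∧ (n : ℝ) ≤ X),
        ∑ m ∈ (Icc 1 N).filter (fun m : ℕ => p m ∧ z < m ∧ (m : ℝ) ≤ T / n), f n m :=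
  sum_finset_product' _ _ _ fun x => by
    simp only [hyperbolicRegion, mem_filter, mem_product]; tauto

theorem sum_coveringBox (f : ℕ → ℕ → ℂ) (k : ℕ) :
    ∑ x ∈ coveringBox p N T z w k, f x.1 x.2 =
      ∑ n ∈ (Icc 1 N).filter (fun n : ℕ => p n ∧ w * k < n ∧ (n : ℝ) ≤ w * (k + 1)),
        ∑ m ∈ (Icc 1 N).filter (fun m : ℕ => p m ∧ z < m ∧ (m : ℝ) ≤ T / (w * (k + 1))),
          f n m :=
  sum_finset_product' _ _ _ fun x => by
    simp only [coveringBox, mem_filter, mem_product]; tauto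

variable {p N T z w X}

open Function in
theorem pairwise_disjoint_coveringBox (hw : 0 < w) :
    Pairwise (Disjoint on (coveringBox p N T z w)) := by
  intro k l hne
  refine disjoint_left.mpr fun x hk hl => hne ?_
  simp only [coveringBox, mem_filter] at hk hl
  have hkl : (k : ℝ) < l + 1 :=
    lt_of_mul_lt_mul_left (hk.2.1.2.1.trans_le hl.2.1.2.2) hw.le
  have hlk : (l : ℝ) < k + 1 :=
    lt_of_mul_lt_mul_left (hl.2.1.2.1.trans_le hk.2.1.2.2) hw.le
  have : k < l + 1 := by exact_mod_cast hkl
  have : l < k + 1 := by exact_mod_cast hlk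
  omega

theorem biUnion_coveringBox_subset (hT : 0 ≤ T) (hw : 0 < w) (hz : z ≤ w * w) :
    (coveringIndices N w X).biUnion (coveringBox p N T z w) ⊆ hyperbolicRegion p N T z X := by
  intro x hx
  obtain ⟨k, hk, hx⟩ := mem_biUnion.mp hx
  simp only [coveringIndices, mem_filter] at hk
  simp only [coveringBox, mem_filter] at hx
  obtain ⟨hxN, ⟨hpn, hkn, hnk⟩, hpm, hzm, hmk⟩ := hx
  have hn : (0 : ℝ) < x.1 := by
    have := (mem_Icc.mp (mem_product.mp hxN).1).1
    exact_mod_cast this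
  have hkX : w * (k + 1) ≤ X := by
    have := mul_le_mul_of_nonneg_left (show (k : ℝ) + 1 ≤ X / w by linarith [hk.2.2]) hw.le
    rwa [mul_div_cancel₀ _ hw.ne'] at this
  refine mem_filter.mpr ⟨hxN, ⟨hpn, ?_, hnk.trans hkX⟩, hpm, hzm,
    hmk.trans (div_le_div_of_nonneg_left hT hn hnk)⟩
  nlinarith [hk.2.1]

theorem mem_biUnion_coveringBox (hw : 1 ≤ w) (hz : w * w ≤ z) {x : ℕ × ℕ}
    (hx : x ∈ hyperbolicRegion p N T z X) (hlow : z + w < x.1) (hhigh : (x.1 : ℝ) ≤ X - w)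
    (hnear : (x.1 : ℝ) ≤ T / x.2 - w) :
    x ∈ (coveringIndices N w X).biUnion (coveringBox p N T z w) := by
  simp only [hyperbolicRegion, mem_filter, mem_product, mem_Icc] at hx
  obtain ⟨⟨⟨hn1, hnN⟩, hm1, hmN⟩, ⟨hpn, -, -⟩, hpm, hzm, -⟩ := hx
  have hw0 : 0 < w := by linarith
  have hn0 : (0 : ℝ) < x.1 := by nlinarith
  have hm0 : (0 : ℝ) < x.2 := by exact_mod_cast hm1
  obtain ⟨k, hk⟩ : ∃ k, ⌈(x.1 : ℝ) / w⌉₊ = k + 1 :=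
    Nat.exists_eq_add_one.mpr (Nat.ceil_pos.mpr (by positivity))
  have hceil_ge : (x.1 : ℝ) / w ≤ k + 1 := by exact_mod_cast hk ▸ Nat.le_ceil ((x.1 : ℝ) / w)
  have hceil_lt : (k : ℝ) < x.1 / w := by
    have := Nat.ceil_lt_add_one (show 0 ≤ (x.1 : ℝ) / w by positivity)
    rw [hk] at this; push_cast at this; linarith
  have hkn : w * k < x.1 := by rwa [lt_div_iff₀' hw0] at hceil_lt
  have hnk : (x.1 : ℝ) ≤ w * (k + 1) := by rwa [div_le_iff₀' hw0] at hceil_ge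
  have hwk : w ≤ k := by nlinarith
  have hkN : k ≤ N := by
    have : (k : ℝ) ≤ x.1 := by nlinarith
    have : k ≤ x.1 := by exact_mod_cast this
    omega
  have hkX : (k : ℝ) ≤ X / w - 1 := by
    rw [le_sub_iff_add_le, le_div_iff₀ hw0]; nlinarith
  have hmk : (x.2 : ℝ) ≤ T / (w * (k + 1)) := by
    rw [le_div_iff₀ (by positivity)]
    have : w * (k + 1) ≤ T / x.2 := by linarith
    rwa [le_div_iff₀' hm0] at this
  refine mem_biUnion.mpr ⟨k, mem_filter.mpr ⟨mem_Icc.mpr ⟨?_, hkN⟩, hwk, hkX⟩, ?_⟩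
  · have : (0 : ℝ) < k := by linarith
    exact_mod_cast this
  · simp only [coveringBox, mem_filter, mem_product, mem_Icc]
    exact ⟨⟨⟨hn1, hnN⟩, hm1, hmN⟩, ⟨hpn, hkn, hnk⟩, hpm, hzm, hmk⟩

theorem bounds_of_mem_hyperbolicRegion (hz : 0 < z) {x : ℕ × ℕ}
    (hx : x ∈ hyperbolicRegion p N T z X) :
    (z < x.1 ∧ (x.1 : ℝ) ≤ X) ∧ (z < x.2 ∧ (x.2 : ℝ) ≤ T / z) ∧ (x.1 : ℝ) * x.2 ≤ T := by
  simp only [hyperbolicRegion, mem_filter, mem_product, mem_Icc] at hx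
  obtain ⟨-, ⟨-, hzn, hnX⟩, -, hzm, hmn⟩ := hx
  have hn0 : (0 : ℝ) < x.1 := hz.trans hzn
  have hnm : (x.1 : ℝ) * x.2 ≤ T := by rwa [le_div_iff₀' hn0] at hmn
  have hT : 0 ≤ T := (by positivity : (0 : ℝ) ≤ x.1 * x.2).trans hnm
  exact ⟨⟨hzn, hnX⟩, ⟨hzm, hmn.trans (div_le_div_of_nonneg_left hT hz hzn.le)⟩, hnm⟩

theorem card_hyperbolicRegion_sdiff_biUnion_coveringBox_le (hw : 1 ≤ w) (hz : w * w = z)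
    (hzT : z * z ≤ T) :
    (#(hyperbolicRegion p N T z X \ (coveringIndices N w X).biUnion (coveringBox p N T z w)) : ℝ)
      ≤ 6 * T / w := by
  set P := hyperbolicRegion p N T z X
  have hz1 : 1 ≤ z := by nlinarith
  have hz0 : 0 < z := by linarith
  have hTz : 0 ≤ T / z := div_nonneg (by nlinarith) hz0.le
  have hzTz : z ≤ T / z := by rw [le_div_iff₀ hz0]; nlinarith
  have hcount : (w + 1) * (T / z) ≤ 2 * T / w := calc
    (w + 1) * (T / z) ≤ (2 * w) * (T / z) := mul_le_mul_of_nonneg_right (by linarith) hTz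
    _ = 2 * T / w := by rw [← hz]; field_simp
  have hlow : (#{x ∈ P | (x.1 : ℝ) ≤ z + w} : ℝ) ≤ 2 * T / w := by
    refine (card_le_of_forall_mem_Ioc_fiberwise (A := z) (B := z + w) (C := fun _ => z)
      (D := fun _ => T / z) (K := T / z) (by linarith) (fun _ => by linarith)
      (fun _ => by linarith) fun x hx => ?_).trans ((le_of_eq (by ring)).trans hcount)
    obtain ⟨hxP, hxw⟩ := mem_filter.mp hx
    obtain ⟨⟨hzn, -⟩, hm, -⟩ := bounds_of_mem_hyperbolicRegion hz0 hxP
    exact ⟨⟨hzn, hxw⟩, hm⟩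
  have hhigh : (#{x ∈ P | X - w < x.1} : ℝ) ≤ 2 * T / w := by
    refine (card_le_of_forall_mem_Ioc_fiberwise (A := X - w) (B := X) (C := fun _ => z)
      (D := fun _ => T / z) (K := T / z) (by linarith) (fun _ => by linarith)
      (fun _ => by linarith) fun x hx => ?_).trans ((le_of_eq (by ring)).trans hcount)
    obtain ⟨hxP, hxw⟩ := mem_filter.mp hx
    obtain ⟨⟨-, hnX⟩, hm, -⟩ := bounds_of_mem_hyperbolicRegion hz0 hxP
    exact ⟨⟨hxw, hnX⟩, hm⟩
  have hnear : (#{x ∈ P | T / x.2 - w < x.1} : ℝ) ≤ 2 * T / w := by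
    rw [← card_image_of_injective _ Prod.swap_injective]
    refine (card_le_of_forall_mem_Ioc_fiberwise (A := z) (B := T / z) (C := fun m => T / m - w)
      (D := fun m => T / m) (K := w + 1) (by linarith) (fun _ => by linarith)
      (fun _ => by linarith) fun y hy => ?_).trans ?_
    · obtain ⟨x, hx, rfl⟩ := mem_image.mp hy
      obtain ⟨hxP, hxw⟩ := mem_filter.mp hx
      obtain ⟨⟨hzn, -⟩, ⟨hzm, hmT⟩, hnm⟩ := bounds_of_mem_hyperbolicRegion hz0 hxP
      exact ⟨⟨hzm, hmT⟩, hxw, (le_div_iff₀ (hz0.trans hzm)).mpr hnm⟩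
    · calc (T / z - z + 1) * (w + 1) ≤ (w + 1) * (T / z) := by nlinarith
        _ ≤ 2 * T / w := hcount
  have hsub : P \ (coveringIndices N w X).biUnion (coveringBox p N T z w) ⊆
      {x ∈ P | (x.1 : ℝ) ≤ z + w} ∪ {x ∈ P | X - w < x.1} ∪ {x ∈ P | T / x.2 - w < x.1} := by
    intro x hx
    obtain ⟨hxP, hxQ⟩ := mem_sdiff.mp hx
    simp only [mem_union, mem_filter, hxP, true_and]
    by_contra! h
    exact hxQ (mem_biUnion_coveringBox hw hz.le hxP h.1.1 h.1.2 h.2)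
  calc _ ≤ (#({x ∈ P | (x.1 : ℝ) ≤ z + w} ∪ {x ∈ P | X - w < x.1} ∪
        {x ∈ P | T / x.2 - w < x.1}) : ℝ) := by exact_mod_cast card_le_card hsub
    _ ≤ #{x ∈ P | (x.1 : ℝ) ≤ z + w} + #{x ∈ P | X - w < x.1} +
        #{x ∈ P | T / x.2 - w < x.1} := by
      exact_mod_cast (card_union_le _ _).trans (Nat.add_le_add_right (card_union_le _ _) _)
    _ ≤ 2 * T / w + 2 * T / w + 2 * T / w := by gcongr
    _ = 6 * T / w := by ring

theorem norm_sum_hyperbola_sub_sum_coveringBoxes_le {M : ℝ} (f : ℕ → ℕ → ℂ)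
    (hf : ∀ n m : ℕ, (n : ℝ) * m ≤ T → ‖f n m‖ ≤ M) (hw : 1 ≤ w) (hz : w * w = z)
    (hzT : z * z ≤ T) :
    ‖∑ n ∈ (Icc 1 N).filter (fun n : ℕ => p n ∧ z < n ∧ (n : ℝ) ≤ X),
        ∑ m ∈ (Icc 1 N).filter (fun m : ℕ => p m ∧ z < m ∧ (m : ℝ) ≤ T / n), f n m -
      ∑ k ∈ (Icc 1 N).filter (fun k : ℕ => w ≤ k ∧ (k : ℝ) ≤ X / w - 1),
        ∑ n ∈ (Icc 1 N).filter (fun n : ℕ => p n ∧ w * k < n ∧ (n : ℝ) ≤ w * (k + 1)),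
          ∑ m ∈ (Icc 1 N).filter (fun m : ℕ => p m ∧ z < m ∧ (m : ℝ) ≤ T / (w * (k + 1))),
            f n m‖
      ≤ 6 * T / w * M := by
  simp_rw [← sum_hyperbolicRegion, ← sum_coveringBox]
  have hz0 : 0 < z := by nlinarith
  have hT : 0 ≤ T := by nlinarith
  have hM : 0 ≤ M := (norm_nonneg _).trans (hf 0 0 (by simpa using hT))
  rw [← coveringIndices,
    ← sum_biUnion ((pairwise_disjoint_coveringBox (by linarith)).set_pairwise _),
    ← sum_sdiff (biUnion_coveringBox_subset hT (by linarith) hz.ge), add_sub_cancel_right]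
  refine (norm_sum_le_of_le _ fun x hx => hf x.1 x.2
    (bounds_of_mem_hyperbolicRegion hz0 (mem_sdiff.mp hx).1).2.2).trans ?_
  rw [sum_const, nsmul_eq_mul]
  exact mul_le_mul_of_nonneg_right (card_hyperbolicRegion_sdiff_biUnion_coveringBox_le hw hz hzT) hM

end

theorem norm_rpow_mul_mul_jacobiSym_le {c T : ℝ} (hc : 0 ≤ c) {α β : ℂ} (hα : ‖α‖ ≤ 1)
    (hβ : ‖β‖ ≤ 1) {n m : ℕ} (hnm : (n : ℝ) * m ≤ T) :
    ‖((((n : ℝ) * m) ^ c : ℝ) : ℂ) * α * β * (jacobiSym n m : ℂ)‖ ≤ T ^ c := by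
  have hJ : ‖(jacobiSym n m : ℂ)‖ ≤ 1 := by
    rcases jacobiSym.trichotomy n m with h | h | h <;> simp [h]
  have hpow : ‖((((n : ℝ) * m) ^ c : ℝ) : ℂ)‖ ≤ T ^ c := by
    rw [Complex.norm_real, Real.norm_of_nonneg (by positivity)]
    exact Real.rpow_le_rpow (by positivity) hnm hc
  rw [norm_mul, norm_mul, norm_mul, mul_assoc, mul_assoc]
  exact (mul_le_of_le_one_right (norm_nonneg _)
    (mul_le_one₀ hα (by positivity) (mul_le_one₀ hβ (norm_nonneg _) hJ))).trans hpow

theorem jacobi_hyperbolic_covering_general (c : ℝ) (hc : 0 ≤ c) (δ : ℝ) (hδ1 : δ ≤ 1/2) :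
    ∃ C : ℝ, 0 < C ∧ ∀ T z : ℝ, 2 ≤ T → 2 ≤ z → z < T ^ δ →
      ∀ a b : ℕ → ℂ, (∀ n, ‖a n‖ ≤ 1) → (∀ m, ‖b m‖ ≤ 1) →
      ‖(
        (∑ n ∈ (Finset.Icc 1 ⌊T⌋₊).filter
            (fun n : ℕ => Odd n ∧ Squarefree n ∧ z < (n : ℝ) ∧ (n : ℝ) ≤ T ^ δ),
          ∑ m ∈ (Finset.Icc 1 ⌊T⌋₊).filter
            (fun m : ℕ => Odd m ∧ Squarefree m ∧ z < (m : ℝ) ∧ (m : ℝ) ≤ T / (n : ℝ)),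
            (((n : ℝ) * (m : ℝ)) ^ c : ℝ) * a n * b m * (jacobiSym n m : ℂ))
        - ∑ k ∈ (Finset.Icc 1 ⌊T⌋₊).filter
            (fun k : ℕ => z ^ ((1 : ℝ)/2) ≤ (k : ℝ) ∧ (k : ℝ) ≤ T ^ δ / z ^ ((1 : ℝ)/2) - 1),
            ∑ n ∈ (Finset.Icc 1 ⌊T⌋₊).filter
              (fun n : ℕ => Odd n ∧ Squarefree n ∧
                z ^ ((1 : ℝ)/2) * (k : ℝ) < (n : ℝ) ∧ (n : ℝ) ≤ z ^ ((1 : ℝ)/2) * ((k : ℝ) + 1)),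
              ∑ m ∈ (Finset.Icc 1 ⌊T⌋₊).filter
                (fun m : ℕ => Odd m ∧ Squarefree m ∧ z < (m : ℝ) ∧
                  (m : ℝ) ≤ T / (z ^ ((1 : ℝ)/2) * ((k : ℝ) + 1))),
                (((n : ℝ) * (m : ℝ)) ^ c : ℝ) * a n * b m * (jacobiSym n m : ℂ))‖
        ≤ C * T ^ (1 + c) / z ^ ((1 : ℝ)/2) := by
  refine ⟨6, by norm_num, fun T z hT hz hzT a b ha hb => ?_⟩
  have hw : 1 ≤ z ^ ((1 : ℝ) / 2) := Real.one_le_rpow (by linarith) (by norm_num)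
  have hww : z ^ ((1 : ℝ) / 2) * z ^ ((1 : ℝ) / 2) = z := by
    rw [← Real.sqrt_eq_rpow, Real.mul_self_sqrt (by linarith)]
  have hzzT : z * z ≤ T := by
    have hz_sqrt : z ≤ √T := by
      rw [Real.sqrt_eq_rpow]
      exact hzT.le.trans (Real.rpow_le_rpow_of_exponent_le (by linarith) hδ1)
    nlinarith [Real.mul_self_sqrt (show 0 ≤ T by linarith)]
  have key := norm_sum_hyperbola_sub_sum_coveringBoxes_le (p := fun n => Odd n ∧ Squarefree n)
    (N := ⌊T⌋₊) (X := T ^ δ) _ (fun n m => norm_rpow_mul_mul_jacobiSym_le hc (ha n) (hb m))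
    hw hww hzzT
  rw [show 6 * T / z ^ ((1 : ℝ) / 2) * T ^ c = 6 * T ^ (1 + c) / z ^ ((1 : ℝ) / 2) by
    rw [Real.rpow_add (by linarith), Real.rpow_one]; ring] at key
  simpa only [and_assoc] using key

/-- Lemma 2.1 (the covering lemma). -/
theorem jacobi_hyperbolic_covering (c : ℝ) (hc : 0 ≤ c) (δ : ℝ) (hδ0 : 0 < δ) (hδ1 : δ ≤ 1/2) :
    ∃ C : ℝ, 0 < C ∧ ∀ T z : ℝ, 2 ≤ T → 2 ≤ z → z < T ^ δ →
      ∀ a b : ℕ → ℂ, (∀ n, ‖a n‖ ≤ 1) → (∀ m, ‖b m‖ ≤ 1) →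
      ‖(
        (∑ n ∈ (Finset.Icc 1 ⌊T⌋₊).filter
            (fun n : ℕ => Odd n ∧ Squarefree n ∧ z < (n : ℝ) ∧ (n : ℝ) ≤ T ^ δ),
          ∑ m ∈ (Finset.Icc 1 ⌊T⌋₊).filter
            (fun m : ℕ => Odd m ∧ Squarefree m ∧ z < (m : ℝ) ∧ (m : ℝ) ≤ T / (n : ℝ)),
            (((n : ℝ) * (m : ℝ)) ^ c : ℝ) * a n * b m * (jacobiSym n m : ℂ))
        - ∑ k ∈ (Finset.Icc 1 ⌊T⌋₊).filter
            (fun k : ℕ => z ^ ((1 : ℝ)/2) ≤ (k : ℝ) ∧ (k : ℝ) ≤ T ^ δ / z ^ ((1 : ℝ)/2) - 1),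
            ∑ n ∈ (Finset.Icc 1 ⌊T⌋₊).filter
              (fun n : ℕ => Odd n ∧ Squarefree n ∧
                z ^ ((1 : ℝ)/2) * (k : ℝ) < (n : ℝ) ∧ (n : ℝ) ≤ z ^ ((1 : ℝ)/2) * ((k : ℝ) + 1)),
              ∑ m ∈ (Finset.Icc 1 ⌊T⌋₊).filter
                (fun m : ℕ => Odd m ∧ Squarefree m ∧ z < (m : ℝ) ∧
                  (m : ℝ) ≤ T / (z ^ ((1 : ℝ)/2) * ((k : ℝ) + 1))),
                (((n : ℝ) * (m : ℝ)) ^ c : ℝ) * a n * b m * (jacobiSym n m : ℂ))‖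
        ≤ C * T ^ (1 + c) / z ^ ((1 : ℝ)/2) :=
  jacobi_hyperbolic_covering_general c hc δ hδ1
end

section
/- There exist an absolute constant κ > 0 and T₀ ≥ 2 such that for all real T ≥ T₀, all real z with 2 ≤ z ≤ T^{1/4}, and every odd prime p with z < p ≤ 2z, the following holds: setting a_n = (n/p) for all n and b_m = 1 if m = p and b_m = 0 otherwise, one has ∑*_{z < n,m ≤ T, nm ≤ T} a_n b_m (n/m) ≥ κ · T/z, where the sum is over pairs (n,m) of odd square-free integers with z < n ≤ T, z < m ≤ T and nm ≤ T. In particular, the exponent 1/4 of z in the bound T(log T)/z^{1/4} cannot be improved beyond 1. -/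
/-!
Only the pairs `(n, p)` contribute, each with weight `(n/p)² ≥ 0`, equal to `1` when `p ∤ n`. So
the sum is at least the number of odd squarefree `n ∈ (z, T/p]` prime to `p`. About half of that
range is odd; the odd non-squarefree `n` are odd multiples of some `d²` with `d ≥ 3`, of density at
most `∑_{d ≥ 3} 1/(2d²) ≤ 1/4`, and the odd multiples of `p ≥ 3` have density at most `1/6`.
This leaves `≫ T/p ≫ T/z` admissible `n`, up to the errors `O(z + √T)`, which `z ≤ T^{1/4}` makes
negligible.
-/

open Finset
open scoped Classical

lemma card_Ioc_filter_modEq_le {a b : ℕ} (hab : a ≤ b) (r v : ℕ) (hr : 0 < r) :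
    (#{x ∈ Ioc a b | x ≡ v [MOD r]} : ℝ) ≤ ((b : ℝ) - a) / r + 1 := by
  have hq : ((#{x ∈ Ioc a b | x ≡ v [MOD r]} : ℤ) : ℚ) ≤ ((b : ℚ) - a) / r + 1 := by
    rw [Nat.Ioc_filter_modEq_card a b hr v]
    have hb := Int.floor_le (((b : ℚ) - v) / r)
    have ha := Int.lt_floor_add_one (((a : ℚ) - v) / r)
    have hab' : (0 : ℚ) ≤ ((b : ℚ) - a) / r := div_nonneg (by simpa) r.cast_nonneg
    have hsub : ((b : ℚ) - v) / r - ((a : ℚ) - v) / r = ((b : ℚ) - a) / r := by ring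
    push_cast
    exact max_le (by linarith) (by linarith)
  simpa using (Rat.cast_le (K := ℝ)).mpr hq

lemma card_Ioc_filter_modEq_ge (a b r v : ℕ) (hr : 0 < r) :
    ((b : ℝ) - a) / r - 1 ≤ #{x ∈ Ioc a b | x ≡ v [MOD r]} := by
  have hq : ((b : ℚ) - a) / r - 1 ≤ ((#{x ∈ Ioc a b | x ≡ v [MOD r]} : ℤ) : ℚ) := by
    rw [Nat.Ioc_filter_modEq_card a b hr v]
    have hb := Int.lt_floor_add_one (((b : ℚ) - v) / r)
    have ha := Int.floor_le (((a : ℚ) - v) / r)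
    have hsub : ((b : ℚ) - v) / r - ((a : ℚ) - v) / r = ((b : ℚ) - a) / r := by ring
    push_cast
    exact le_max_of_le_left (by linarith)
  simpa using (Rat.cast_le (K := ℝ)).mpr hq

lemma card_Ioc_filter_odd_ge (a b : ℕ) : ((b : ℝ) - a) / 2 - 1 ≤ #{n ∈ Ioc a b | Odd n} := by
  have hodd : ∀ n, Odd n ↔ n ≡ 1 [MOD 2] := fun n => Nat.odd_iff
  simpa [hodd] using card_Ioc_filter_modEq_ge a b 2 1 two_pos

lemma Nat.ModEq.of_odd_of_dvd {m n : ℕ} (hn : Odd n) (hmn : m ∣ n) : n ≡ m [MOD 2 * m] := by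
  obtain ⟨k, rfl⟩ := hmn
  obtain ⟨j, rfl⟩ := (Nat.odd_mul.mp hn).2
  exact ((Nat.modEq_iff_dvd' (Nat.le_mul_of_pos_right m (by omega))).mpr
    ⟨j, Nat.sub_eq_of_eq_add (by ring)⟩).symm

lemma card_Ioc_filter_odd_dvd_le {a b : ℕ} (hab : a ≤ b) {m : ℕ} (hm : 0 < m) :
    (#{n ∈ Ioc a b | Odd n ∧ m ∣ n} : ℝ) ≤ ((b : ℝ) - a) / (2 * m) + 1 := by
  have hsub : {n ∈ Ioc a b | Odd n ∧ m ∣ n} ⊆ {n ∈ Ioc a b | n ≡ m [MOD 2 * m]} :=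
    fun n hn => by
      simp only [mem_filter] at hn ⊢
      exact ⟨hn.1, Nat.ModEq.of_odd_of_dvd hn.2.1 hn.2.2⟩
  calc (#{n ∈ Ioc a b | Odd n ∧ m ∣ n} : ℝ) ≤ #{n ∈ Ioc a b | n ≡ m [MOD 2 * m]} := by
        exact_mod_cast card_le_card hsub
    _ ≤ ((b : ℝ) - a) / (2 * m) + 1 := by
        simpa using card_Ioc_filter_modEq_le hab (2 * m) m (by positivity)

lemma sum_Ioc_two_inv_sq_le (n : ℕ) : ∑ i ∈ Ioc 2 n, ((i : ℝ) ^ 2)⁻¹ ≤ 1 / 2 := by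
  rcases le_or_gt 2 n with hn | hn
  · calc ∑ i ∈ Ioc 2 n, ((i : ℝ) ^ 2)⁻¹ ≤ ((2 : ℕ) : ℝ)⁻¹ - (n : ℝ)⁻¹ :=
          sum_Ioc_inv_sq_le_sub two_ne_zero hn
      _ ≤ 1 / 2 := by norm_num
  · simp [Ioc_eq_empty_of_le hn.le]

lemma exists_Ioc_two_sqrt_mul_self_dvd {n b : ℕ} (hn : Odd n) (hnb : n ≤ b) (hsq : ¬Squarefree n) :
    ∃ d ∈ Ioc 2 b.sqrt, d * d ∣ n := by
  obtain ⟨d, hdn, hd⟩ : ∃ d, d * d ∣ n ∧ d ≠ 1 := by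
    simpa [Squarefree, Nat.isUnit_iff] using hsq
  have hd_odd : Odd d := Odd.of_dvd_nat hn (dvd_trans (dvd_mul_right d d) hdn)
  have hd_pos : d ≠ 0 := by rintro rfl; simp at hdn; simp [hdn] at hn
  refine ⟨d, mem_Ioc.mpr ⟨?_, Nat.le_sqrt.mpr ((Nat.le_of_dvd hn.pos hdn).trans hnb)⟩, hdn⟩
  obtain ⟨k, rfl⟩ := hd_odd
  omega

lemma card_Ioc_filter_odd_not_squarefree_le {a b : ℕ} (hab : a ≤ b) :
    (#{n ∈ Ioc a b | Odd n ∧ ¬Squarefree n} : ℝ) ≤ ((b : ℝ) - a) / 4 + b.sqrt := by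
  have hsub : {n ∈ Ioc a b | Odd n ∧ ¬Squarefree n} ⊆
      (Ioc 2 b.sqrt).biUnion fun d => {n ∈ Ioc a b | Odd n ∧ d * d ∣ n} := by
    intro n hn
    simp only [mem_filter, mem_Ioc] at hn
    obtain ⟨d, hd, hdn⟩ := exists_Ioc_two_sqrt_mul_self_dvd hn.2.1 hn.1.2 hn.2.2
    exact mem_biUnion.mpr ⟨d, hd, mem_filter.mpr ⟨mem_Ioc.mpr hn.1, hn.2.1, hdn⟩⟩
  have hba : (0 : ℝ) ≤ (b : ℝ) - a := by simpa
  calc (#{n ∈ Ioc a b | Odd n ∧ ¬Squarefree n} : ℝ)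
      ≤ ∑ d ∈ Ioc 2 b.sqrt, (#{n ∈ Ioc a b | Odd n ∧ d * d ∣ n} : ℝ) := by
        exact_mod_cast (card_le_card hsub).trans card_biUnion_le
    _ ≤ ∑ d ∈ Ioc 2 b.sqrt, (((b : ℝ) - a) / 2 * ((d : ℝ) ^ 2)⁻¹ + 1) := by
        refine sum_le_sum fun d hd => ?_
        have hd : 0 < d * d := by have := (mem_Ioc.mp hd).1; positivity
        exact (card_Ioc_filter_odd_dvd_le hab hd).trans_eq (by push_cast; ring)
    _ = ((b : ℝ) - a) / 2 * ∑ d ∈ Ioc 2 b.sqrt, ((d : ℝ) ^ 2)⁻¹ + #(Ioc 2 b.sqrt) := by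
        rw [sum_add_distrib, mul_sum, sum_const, nsmul_one]
    _ ≤ ((b : ℝ) - a) / 2 * (1 / 2) + b.sqrt := by
        gcongr
        · exact sum_Ioc_two_inv_sq_le _
        · rw [Nat.card_Ioc]; omega
    _ = ((b : ℝ) - a) / 4 + b.sqrt := by ring

lemma card_Ioc_filter_odd_squarefree_not_dvd_ge (a b : ℕ) {p : ℕ} (hp : 3 ≤ p) :
    ((b : ℝ) - a) / 12 - b.sqrt - 2 ≤ #{n ∈ Ioc a b | Odd n ∧ Squarefree n ∧ ¬p ∣ n} := by
  rcases lt_or_ge b a with hba | hab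
  · have : (b : ℝ) < a := by exact_mod_cast hba
    linarith [(b.sqrt.cast_nonneg : (0 : ℝ) ≤ b.sqrt),
      (Nat.cast_nonneg _ : (0 : ℝ) ≤ #{n ∈ Ioc a b | Odd n ∧ Squarefree n ∧ ¬p ∣ n})]
  have hsub : {n ∈ Ioc a b | Odd n} ⊆ {n ∈ Ioc a b | Odd n ∧ Squarefree n ∧ ¬p ∣ n} ∪
      ({n ∈ Ioc a b | Odd n ∧ ¬Squarefree n} ∪ {n ∈ Ioc a b | Odd n ∧ p ∣ n}) := by
    intro n
    simp only [mem_union, mem_filter]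
    tauto
  have hcard : (#{n ∈ Ioc a b | Odd n} : ℝ) ≤ #{n ∈ Ioc a b | Odd n ∧ Squarefree n ∧ ¬p ∣ n} +
      (#{n ∈ Ioc a b | Odd n ∧ ¬Squarefree n} + #{n ∈ Ioc a b | Odd n ∧ p ∣ n}) := by
    exact_mod_cast (card_le_card hsub).trans
      ((card_union_le _ _).trans (Nat.add_le_add_left (card_union_le _ _) _))
  have hp' : ((b : ℝ) - a) / (2 * p) ≤ ((b : ℝ) - a) / 6 := by
    gcongr
    · simpa
    · have : (3 : ℝ) ≤ p := by exact_mod_cast hp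
      linarith
  linarith [card_Ioc_filter_odd_ge a b, card_Ioc_filter_odd_not_squarefree_le hab,
    card_Ioc_filter_odd_dvd_le hab (m := p) (by omega)]

lemma div_mul_le_floor_div_sub_floor_sub_sqrt {T z p : ℝ} (hT : 96 ^ 4 ≤ T) (hz : 2 ≤ z)
    (hzT : z ≤ T ^ ((1 : ℝ) / 4)) (hzp : z < p) (hp2z : p ≤ 2 * z) :
    1 / 48 * (T / z) ≤ ((⌊T / p⌋₊ : ℝ) - ⌊z⌋₊) / 12 - (⌊T / p⌋₊).sqrt - 2 := by
  set w := T ^ ((1 : ℝ) / 4)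
  have hT0 : 0 < T := lt_of_lt_of_le (by norm_num) hT
  have hz0 : 0 < z := by linarith
  have hw4 : w ^ 4 = T := by
    rw [← Real.rpow_natCast, ← Real.rpow_mul hT0.le]
    norm_num
  have hw : 96 ≤ w :=
    (pow_le_pow_iff_left₀ (by norm_num) (by positivity) four_ne_zero).mp (hw4 ▸ hT)
  have hTz : w ^ 3 ≤ T / z := by
    rw [le_div_iff₀ hz0, ← hw4]
    nlinarith [pow_nonneg (hw.trans' (by norm_num) : (0 : ℝ) ≤ w) 3]
  have hTp : T / p ≤ T := div_le_self hT0.le (by linarith)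
  have hb : T / z / 2 - 1 ≤ ⌊T / p⌋₊ := by
    have : T / z / 2 ≤ T / p := by
      rw [div_div]
      exact div_le_div_of_nonneg_left hT0.le (by linarith) (by linarith)
    linarith [Nat.lt_floor_add_one (T / p)]
  have hs : ((⌊T / p⌋₊).sqrt : ℝ) ≤ w ^ 2 := by
    refine (pow_le_pow_iff_left₀ (by positivity) (by positivity) two_ne_zero).mp ?_
    calc (((⌊T / p⌋₊).sqrt : ℕ) : ℝ) ^ 2 ≤ ⌊T / p⌋₊ := by exact_mod_cast Nat.sqrt_le' _
      _ ≤ (w ^ 2) ^ 2 := by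
        rw [← pow_mul, hw4]
        exact (Nat.floor_le (div_nonneg hT0.le (by linarith))).trans hTp
  have hw2 : 96 * w ≤ w ^ 2 := by nlinarith
  have hw3 : 96 * w ^ 2 ≤ w ^ 3 := by nlinarith
  linarith [Nat.floor_le hz0.le]

lemma card_le_sum_jacobiSym (T z : ℝ) {p : ℕ} (hp : p.Prime) (hp_odd : Odd p) (hzp : z < p) :
    (#{n ∈ Ioc ⌊z⌋₊ ⌊T / p⌋₊ | Odd n ∧ Squarefree n ∧ ¬p ∣ n} : ℝ) ≤
      ∑ q ∈ (Finset.Icc 1 ⌊T⌋₊ ×ˢ Finset.Icc 1 ⌊T⌋₊).filter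
          (fun q : ℕ × ℕ => Odd q.1 ∧ Squarefree q.1 ∧ Odd q.2 ∧ Squarefree q.2 ∧
            z < (q.1 : ℝ) ∧ z < (q.2 : ℝ) ∧ (q.1 : ℝ) * (q.2 : ℝ) ≤ T),
        (jacobiSym q.1 p : ℝ) * (if q.2 = p then 1 else 0) * (jacobiSym q.1 q.2 : ℝ) := by
  set S := {n ∈ Ioc ⌊z⌋₊ ⌊T / p⌋₊ | Odd n ∧ Squarefree n ∧ ¬p ∣ n}
  have hp0 : (0 : ℝ) < p := by exact_mod_cast hp.pos
  have hmem : ∀ n ∈ S, (n, p) ∈ (Finset.Icc 1 ⌊T⌋₊ ×ˢ Finset.Icc 1 ⌊T⌋₊).filter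
      (fun q : ℕ × ℕ => Odd q.1 ∧ Squarefree q.1 ∧ Odd q.2 ∧ Squarefree q.2 ∧
        z < (q.1 : ℝ) ∧ z < (q.2 : ℝ) ∧ (q.1 : ℝ) * (q.2 : ℝ) ≤ T) := by
    intro n hn
    obtain ⟨⟨hzn, hnT⟩, hn_odd, hn_sf, -⟩ := by simpa only [S, mem_filter, mem_Ioc] using hn
    have hn1 : 1 ≤ n := by omega
    have hnp : (n : ℝ) * p ≤ T :=
      (le_div_iff₀ hp0).mp ((Nat.le_floor_iff' (by omega)).mp hnT)
    have hn_le : (n : ℝ) ≤ n * p :=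
      le_mul_of_one_le_right n.cast_nonneg (by exact_mod_cast hp.one_le)
    have hp_le : (p : ℝ) ≤ n * p := le_mul_of_one_le_left hp0.le (by exact_mod_cast hn1)
    simp only [mem_filter, mem_product, mem_Icc]
    exact ⟨⟨⟨hn1, Nat.le_floor (hn_le.trans hnp)⟩, hp.one_le, Nat.le_floor (hp_le.trans hnp)⟩,
      hn_odd, hn_sf, hp_odd, hp.prime.squarefree, Nat.lt_of_floor_lt hzn, hzp, hnp⟩
  refine le_trans ?_ (sum_le_sum_of_subset_of_nonneg (image_subset_iff.mpr hmem) fun q _ _ => ?_)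
  · rw [sum_image fun a _ b _ h => (Prod.mk.inj h).1, card_eq_sum_ones, Nat.cast_sum]
    refine (sum_congr rfl fun n hn => ?_).le
    have hcop : (n : ℤ).gcd p = 1 := by
      rw [Int.gcd_natCast_natCast]
      exact (hp.coprime_iff_not_dvd.mpr (mem_filter.mp hn).2.2.2).symm
    rw [if_pos rfl, mul_one, ← sq]
    exact_mod_cast (jacobiSym.sq_one hcop).symm
  · split_ifs with h
    · rw [h, mul_one]
      exact mul_self_nonneg _
    · simp

/-- the lower-bound example showing the exponent of z cannot exceed 1. -/
theorem jacobi_hyperbolic_lower_bound_example :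
    ∃ κ : ℝ, 0 < κ ∧ ∃ T₀ : ℝ, 2 ≤ T₀ ∧
      ∀ T : ℝ, T₀ ≤ T → ∀ z : ℝ, 2 ≤ z → z ≤ T ^ ((1 : ℝ)/4) →
      ∀ p : ℕ, p.Prime → Odd p → z < (p : ℝ) → (p : ℝ) ≤ 2 * z →
      κ * (T / z) ≤
        ∑ q ∈ (Finset.Icc 1 ⌊T⌋₊ ×ˢ Finset.Icc 1 ⌊T⌋₊).filter
            (fun q : ℕ × ℕ => Odd q.1 ∧ Squarefree q.1 ∧ Odd q.2 ∧ Squarefree q.2 ∧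
              z < (q.1 : ℝ) ∧ z < (q.2 : ℝ) ∧ (q.1 : ℝ) * (q.2 : ℝ) ≤ T),
          (jacobiSym q.1 p : ℝ) * (if q.2 = p then 1 else 0) * (jacobiSym q.1 q.2 : ℝ) := by
  refine ⟨1 / 48, by norm_num, 96 ^ 4, by norm_num, fun T hT z hz hzT p hp hp_odd hzp hp2z => ?_⟩
  have hp3 : 3 ≤ p := by
    obtain ⟨k, rfl⟩ := hp_odd
    have := hp.two_le
    omega
  calc 1 / 48 * (T / z) ≤ ((⌊T / p⌋₊ : ℝ) - ⌊z⌋₊) / 12 - (⌊T / p⌋₊).sqrt - 2 :=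
        div_mul_le_floor_div_sub_floor_sub_sqrt hT hz hzT hzp hp2z
    _ ≤ #{n ∈ Ioc ⌊z⌋₊ ⌊T / p⌋₊ | Odd n ∧ Squarefree n ∧ ¬p ∣ n} :=
        card_Ioc_filter_odd_squarefree_not_dvd_ge _ _ hp3
    _ ≤ _ := card_le_sum_jacobiSym T z hp hp_odd hzp
end

section
/- The series ∑_{k ≥ 1, k odd} φ(k²)/k⁴, taken over odd positive integers k, converges and equals 6ζ(2)/(7ζ(3)), where φ is Euler's totient function and ζ is the Riemann zeta function. -/
/-!
Since `φ (k ^ 2) = k * φ k`, the series is `∑_{k odd} φ(k) / k ^ 3`. The identity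
`∑_{d ∣ n} φ d = n` gives `∑_n φ(n) / n ^ s = ζ(s - 1) / ζ(s)` for `re s > 2`, and as
`n ↦ φ(n) / n ^ 3` is multiplicative, writing `n = 2 ^ a * (2 * b + 1)` factors that sum into the
Euler factor at `2`, `∑_a φ(2 ^ a) / 8 ^ a = 7 / 6`, times the odd part.
-/

open LSeries
open scoped LSeries.notation

theorem Nat.totient_sq (n : ℕ) : Nat.totient (n ^ 2) = n * Nat.totient n := by
  rcases Nat.eq_zero_or_pos n with rfl | hn
  · simp
  have h := Nat.totient_gcd_mul_totient_mul n n
  rw [Nat.gcd_self, ← sq] at h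
  exact Nat.eq_of_mul_eq_mul_left (Nat.totient_pos.mpr hn) (by rw [h]; ring)

theorem Nat.totient_sq_div_pow_succ {K : Type*} [Field K] [CharZero K] (n k : ℕ) :
    (Nat.totient (n ^ 2) : K) / (n : K) ^ (k + 1) = Nat.totient n / (n : K) ^ k := by
  rcases eq_or_ne n 0 with rfl | hn
  · simp
  rw [Nat.totient_sq, Nat.cast_mul, _root_.pow_succ', mul_div_mul_left _ _ (by exact_mod_cast hn)]

theorem Nat.two_pow_mul_odd_injective :
    Function.Injective fun p : ℕ × ℕ => 2 ^ p.1 * (2 * p.2 + 1) := by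
  have hval (a b : ℕ) : padicValNat 2 (2 ^ a * (2 * b + 1)) = a := by
    rw [padicValNat.mul (by positivity) (by omega), padicValNat.prime_pow,
      padicValNat.eq_zero_of_not_dvd (by omega), add_zero]
  rintro ⟨a, b⟩ ⟨c, d⟩ h
  obtain rfl : a = c := by simpa only [hval] using congrArg (padicValNat 2) h
  have : 2 * b + 1 = 2 * d + 1 := Nat.eq_of_mul_eq_mul_left (by positivity) h
  simp only [Prod.mk.injEq, true_and]
  omega

theorem hasSum_mul_of_two_pow_mul_odd {R : Type*} [NormedCommRing R] [CompleteSpace R]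
    {f : ℕ → R} (hf₀ : f 0 = 0) (hf : ∀ {m n}, m.Coprime n → f (m * n) = f m * f n)
    (hsum : Summable f) {E T : R} (hE : HasSum (fun a => f (2 ^ a)) E)
    (hT : HasSum (fun b => f (2 * b + 1)) T) : HasSum f (E * T) := by
  have hsplit : (fun p : ℕ × ℕ => f (2 ^ p.1) * f (2 * p.2 + 1)) =
      f ∘ fun p : ℕ × ℕ => 2 ^ p.1 * (2 * p.2 + 1) := by
    ext ⟨a, b⟩
    exact (hf (Nat.Coprime.pow_left _ (by simp))).symm
  have hprod := hE.mul hT (hsplit ▸ hsum.comp_injective Nat.two_pow_mul_odd_injective)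
  rw [hsplit] at hprod
  refine (Nat.two_pow_mul_odd_injective.hasSum_iff fun n hn => ?_).mp hprod
  obtain rfl | hn₀ := eq_or_ne n 0
  · exact hf₀
  obtain ⟨a, m, ⟨b, rfl⟩, rfl⟩ := Nat.exists_eq_two_pow_mul_odd hn₀
  exact absurd ⟨(a, b), rfl⟩ hn

theorem HasSum.odd_of_two_pow {𝕜 : Type*} [NormedField 𝕜] [CompleteSpace 𝕜]
    {f : ℕ → 𝕜} (hf₀ : f 0 = 0) (hf : ∀ {m n}, m.Coprime n → f (m * n) = f m * f n)
    {S E : 𝕜} (hS : HasSum f S) (hE : HasSum (fun a => f (2 ^ a)) E) (hE₀ : E ≠ 0) :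
    HasSum (fun b => f (2 * b + 1)) (S / E) := by
  obtain ⟨T, hT⟩ :=
    hS.summable.comp_injective (i := fun b => 2 * b + 1) fun _ _ h => by simpa using h
  have := (hasSum_mul_of_two_pow_mul_odd hf₀ hf hS.summable hE hT).unique hS
  rwa [← this, mul_div_cancel_left₀ _ hE₀]

theorem LSeries.term_natCast_eq_term_one (s : ℂ) (n : ℕ) :
    term (fun n => (n : ℂ)) s n = term 1 (s - 1) n := by
  rcases eq_or_ne n 0 with rfl | hn
  · simp
  have hn' : (n : ℂ) ≠ 0 := Nat.cast_ne_zero.mpr hn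
  rw [term_of_ne_zero hn, term_of_ne_zero hn, Pi.one_apply, Complex.cpow_sub _ _ hn',
    Complex.cpow_one, one_div_div]

theorem LSeriesHasSum_natCast {s : ℂ} (hs : 2 < s.re) :
    LSeriesHasSum (fun n => (n : ℂ)) s (riemannZeta (s - 1)) := by
  have := LSeriesHasSum_one (s := s - 1) (by simp; linarith)
  rwa [LSeriesHasSum, ← funext (term_natCast_eq_term_one s)] at this

theorem LSeriesSummable_totient {s : ℂ} (hs : 2 < s.re) :
    LSeriesSummable (fun n => (Nat.totient n : ℂ)) s :=
  LSeriesSummable_of_le_const_mul_rpow (x := 2) hs ⟨1, fun n _ => by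
    rw [one_mul, Complex.norm_natCast, show (2 : ℝ) - 1 = 1 by norm_num, Real.rpow_one]
    exact_mod_cast Nat.totient_le n⟩

theorem totient_convolution_one : (fun n => (Nat.totient n : ℂ)) ⍟ 1 = fun n : ℕ => (n : ℂ) := by
  ext n
  simp only [LSeries.convolution_def, Pi.one_apply, mul_one]
  rw [Nat.sum_divisorsAntidiagonal (f := fun d _ => (Nat.totient d : ℂ)), ← Nat.cast_sum,
    Nat.sum_totient]

theorem LSeriesHasSum_totient {s : ℂ} (hs : 2 < s.re) :
    LSeriesHasSum (fun n => (Nat.totient n : ℂ)) s (riemannZeta (s - 1) / riemannZeta s) := by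
  have hs₁ : 1 < s.re := by linarith
  have hprod := (LSeriesSummable_totient hs).LSeriesHasSum.convolution (LSeriesHasSum_one hs₁)
  rw [totient_convolution_one] at hprod
  rw [← hprod.unique (LSeriesHasSum_natCast hs),
    mul_div_cancel_right₀ _ (riemannZeta_ne_zero_of_one_lt_re hs₁)]
  exact (LSeriesSummable_totient hs).LSeriesHasSum

theorem LSeries.term_natCast_exponent {f : ℕ → ℂ} (hf : f 0 = 0) (k : ℕ) :
    term f k = fun n => f n / (n : ℂ) ^ k := by
  ext n
  rcases eq_or_ne n 0 with rfl | hn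
  · simp [hf]
  rw [term_of_ne_zero hn, Complex.cpow_natCast]

theorem hasSum_totient_div_pow {k : ℕ} (hk : 2 < k) :
    HasSum (fun n : ℕ => (Nat.totient n : ℂ) / (n : ℂ) ^ k)
      (riemannZeta (k - 1) / riemannZeta k) := by
  rw [← term_natCast_exponent (by simp)]
  exact LSeriesHasSum_totient (by simpa using hk)

theorem hasSum_totient_two_pow_div_pow_three :
    HasSum (fun a : ℕ => (Nat.totient (2 ^ a) : ℂ) / ((2 ^ a : ℕ) : ℂ) ^ 3) (7 / 6) := by
  set g : ℕ → ℂ := fun a => (Nat.totient (2 ^ a) : ℂ) / ((2 ^ a : ℕ) : ℂ) ^ 3 with hg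
  have hgeom : HasSum (fun a : ℕ => (1 / 8 : ℂ) * ((2 ^ 2)⁻¹) ^ a) (1 / 6) := by
    rw [show (1 / 6 : ℂ) = 1 / 8 * (1 - (2 ^ 2)⁻¹)⁻¹ by norm_num]
    exact (hasSum_geometric_of_norm_lt_one (ξ := ((2 : ℂ) ^ 2)⁻¹) (by norm_num)).mul_left (1 / 8)
  have htail : HasSum (fun a => g (a + 1)) (1 / 6) := by
    convert hgeom using 2 with a
    simp only [hg]
    rw [Nat.totient_prime_pow_succ Nat.prime_two, inv_pow, ← pow_mul]
    push_cast
    field_simp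
    ring
  convert htail.zero_add using 1
  norm_num [g]

/-- evaluation of the constant ∑_{k odd} φ(k²)/k⁴ = 6ζ(2)/(7ζ(3)). -/
theorem totient_sq_series_eval :
    HasSum (fun k : ℕ => if Odd k then (Nat.totient (k ^ 2) : ℂ) / (k : ℂ) ^ 4 else 0)
      (6 * riemannZeta 2 / (7 * riemannZeta 3)) := by
  set f : ℕ → ℂ := fun n => (Nat.totient n : ℂ) / (n : ℂ) ^ 3 with hf
  have hmul {m n : ℕ} (h : m.Coprime n) : f (m * n) = f m * f n := by
    simp only [hf, Nat.totient_mul h]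
    push_cast
    rw [mul_pow, mul_div_mul_comm]
  have hf_odd : HasSum (fun b => f (2 * b + 1)) (6 * riemannZeta 2 / (7 * riemannZeta 3)) := by
    have h := (hasSum_totient_div_pow (k := 3) (by norm_num)).odd_of_two_pow (by simp [hf]) hmul
      hasSum_totient_two_pow_div_pow_three (by norm_num)
    rwa [show riemannZeta ((3 : ℕ) - 1) / riemannZeta (3 : ℕ) / (7 / 6) =
      6 * riemannZeta 2 / (7 * riemannZeta 3) by norm_num; ring] at h
  set F : ℕ → ℂ := fun k => if Odd k then (Nat.totient (k ^ 2) : ℂ) / (k : ℂ) ^ 4 else 0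
  have hF_even : HasSum (fun b => F (2 * b)) 0 := by
    convert hasSum_zero with b
    simp [F]
  have hF_odd : HasSum (fun b => F (2 * b + 1)) (6 * riemannZeta 2 / (7 * riemannZeta 3)) := by
    convert hf_odd using 2 with b
    simp only [F, hf, if_pos (odd_two_mul_add_one b)]
    exact Nat.totient_sq_div_pow_succ _ 3
  simpa using hF_even.even_add_odd hF_odd
end
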